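/- Let s₀ > 1/2, s ≥ s₀ and 0 ≤ ρ ≤ s − s₀. Suppose a : ℤ* × ℤ* → ℂ satisfies |a(v,w)| ≤ C (1 + min(|v|,|w|))^ρ / (1 + max(|v|,|w|))^ρ for all v,w, and in addition a(ξ−η,η) ≠ 0 implies ⟨ξ⟩ ≲ max(⟨ξ−η⟩,⟨η⟩) and ⟨η⟩ ∼ ⟨ξ−η⟩. Define R(f,g) by its Fourier coefficients R̂(ξ) = (2π)^{-1} Σ_{η∈ℤ*} a(ξ−η,η) f̂(ξ−η) ĝ(η). Then ‖R(f,g)‖_{H^{s+ρ}} ≲ ‖f‖_{H^s} ‖g‖_{H^{s₀+ρ}} + ‖f‖_{H^{s₀+ρ}} ‖g‖_{H^s} ≲ ‖f‖_{H^s} ‖g‖_{H^s} for all f,g ∈ H^s₀(𝕋) with zero average. -/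

import Mathlib

/-- Square of the zero-mean Sobolev norm, at the level of Fourier coefficients
indexed by ℤ* (the coefficient at 0 is weighted by |0|^{2s} = 0 for s > 0, and
all functions considered have vanishing zero-mode). -/
noncomputable def SobSq (s : ℝ) (f : ℤ → ℂ) : ℝ :=
  ∑' j : ℤ, ‖f j‖ ^ 2 * |(j : ℝ)| ^ (2 * s)

noncomputable def SobNorm (s : ℝ) (f : ℤ → ℂ) : ℝ := Real.sqrt (SobSq s f)

/-- Japanese bracket. -/
noncomputable def jb (x : ℝ) : ℝ := Real.sqrt (1 + x ^ 2)


open ENNReal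

lemma jb_pos (x : ℝ) : 0 < jb x := Real.sqrt_pos.mpr (by positivity)

lemma one_le_jb (x : ℝ) : 1 ≤ jb x := Real.one_le_sqrt.mpr (by nlinarith [sq_nonneg x])

lemma abs_le_jb (x : ℝ) : |x| ≤ jb x := by
  rw [← Real.sqrt_sq_eq_abs]
  exact Real.sqrt_le_sqrt (by nlinarith)

lemma jb_le_one_add_abs (x : ℝ) : jb x ≤ 1 + |x| := by
  have h : 1 + x ^ 2 ≤ (1 + |x|) ^ 2 := by
    have := abs_nonneg x
    nlinarith [sq_abs x]
  calc jb x ≤ Real.sqrt ((1 + |x|) ^ 2) := Real.sqrt_le_sqrt h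
    _ = 1 + |x| := Real.sqrt_sq (by positivity)

lemma one_add_abs_le_sqrt2_jb (x : ℝ) : 1 + |x| ≤ Real.sqrt 2 * jb x := by
  have h : (1 + |x|) ^ 2 ≤ 2 * (1 + x ^ 2) := by
    have h1 : 2 * |x| ≤ 1 + x ^ 2 := by nlinarith [sq_abs x, sq_nonneg (1 - |x|)]
    nlinarith [sq_abs x]
  calc 1 + |x| = Real.sqrt ((1 + |x|) ^ 2) := (Real.sqrt_sq (by positivity)).symm
    _ ≤ Real.sqrt (2 * (1 + x ^ 2)) := Real.sqrt_le_sqrt h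
    _ = Real.sqrt 2 * jb x := Real.sqrt_mul (by norm_num) _

/-- crude Cauchy-Schwarz in ℝ≥0∞. -/
lemma cs_ennreal (x y : ℤ → ℝ≥0∞) :
    (∑' i, x i * y i) ^ 2 ≤ 2 * ((∑' i, x i ^ 2) * (∑' i, y i ^ 2)) := by
  have expand : ∀ u v : ℤ → ℝ≥0∞,
      (∑' i, u i) * (∑' j, v j) = ∑' i, ∑' j, u i * v j := by
    intro u v
    rw [← ENNReal.tsum_mul_right]
    exact tsum_congr fun i => ENNReal.tsum_mul_left.symm
  have key : ∀ i j, (x i * y i) * (x j * y j) ≤ (x i * y j) ^ 2 + (x j * y i) ^ 2 := by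
    intro i j
    have h : (x i * y i) * (x j * y j) = (x i * y j) * (x j * y i) := by ring
    rw [h]
    rcases le_total (x i * y j) (x j * y i) with h1 | h1
    · calc (x i * y j) * (x j * y i) ≤ (x j * y i) * (x j * y i) :=
            mul_le_mul_left h1 _
        _ = (x j * y i) ^ 2 := (sq _).symm
        _ ≤ _ := le_add_self
    · calc (x i * y j) * (x j * y i) ≤ (x i * y j) * (x i * y j) :=
            mul_le_mul_right h1 _
        _ = (x i * y j) ^ 2 := (sq _).symm
        _ ≤ _ := le_self_add
  calc (∑' i, x i * y i) ^ 2 = ∑' i, ∑' j, (x i * y i) * (x j * y j) := by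
        rw [sq]; exact expand _ _
    _ ≤ ∑' i, ∑' j, ((x i * y j) ^ 2 + (x j * y i) ^ 2) :=
        ENNReal.tsum_le_tsum fun i => ENNReal.tsum_le_tsum fun j => key i j
    _ = (∑' i, ∑' j, (x i * y j) ^ 2) + (∑' i, ∑' j, (x j * y i) ^ 2) := by
        rw [← ENNReal.tsum_add]
        exact tsum_congr fun i => ENNReal.tsum_add
    _ = 2 * ((∑' i, x i ^ 2) * (∑' i, y i ^ 2)) := by
        have e1 : (∑' i, ∑' j, (x i * y j) ^ 2) = (∑' i, x i ^ 2) * (∑' i, y i ^ 2) := by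
          rw [expand]
          exact tsum_congr fun i => tsum_congr fun j => (mul_pow _ _ _)
        have e2 : (∑' i : ℤ, ∑' j : ℤ, (x j * y i) ^ 2) = (∑' i, x i ^ 2) * (∑' i, y i ^ 2) := by
          rw [ENNReal.tsum_comm, expand]
          exact tsum_congr fun i => tsum_congr fun j => (mul_pow _ _ _)
        rw [e1, e2, two_mul]

/-- Schur/Young: ℓ² norm of a convolution. -/
lemma schur_ennreal (F G : ℤ → ℝ≥0∞) :
    ∑' ξ : ℤ, (∑' η : ℤ, F (ξ - η) * G η) ^ 2 ≤
      2 * ((∑' η, G η) ^ 2 * ∑' v, F v ^ 2) := by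
  have half_sq : ∀ z : ℝ≥0∞, (z ^ (1/2 : ℝ)) ^ 2 = z := by
    intro z
    rw [← ENNReal.rpow_natCast (z ^ (1/2 : ℝ)) 2, ← ENNReal.rpow_mul]
    norm_num
  have step1 : ∀ ξ : ℤ, (∑' η : ℤ, F (ξ - η) * G η) ^ 2 ≤
      2 * ((∑' η, G η) * (∑' η, G η * F (ξ - η) ^ 2)) := by
    intro ξ
    have := cs_ennreal (fun η => (G η) ^ (1/2 : ℝ)) (fun η => (G η) ^ (1/2 : ℝ) * F (ξ - η))
    simp only [mul_pow, half_sq] at this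
    calc (∑' η : ℤ, F (ξ - η) * G η) ^ 2
        = (∑' η : ℤ, (G η) ^ (1/2 : ℝ) * ((G η) ^ (1/2 : ℝ) * F (ξ - η))) ^ 2 := by
          congr 1
          refine tsum_congr fun η => ?_
          rw [← mul_assoc, ← sq, half_sq]; ring
      _ ≤ 2 * ((∑' η, G η) * (∑' η, G η * F (ξ - η) ^ 2)) := this
  calc ∑' ξ : ℤ, (∑' η : ℤ, F (ξ - η) * G η) ^ 2
      ≤ ∑' ξ : ℤ, 2 * ((∑' η, G η) * (∑' η, G η * F (ξ - η) ^ 2)) :=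
        ENNReal.tsum_le_tsum step1
    _ = 2 * ((∑' η, G η) * ∑' ξ : ℤ, ∑' η, G η * F (ξ - η) ^ 2) := by
        rw [ENNReal.tsum_mul_left, ENNReal.tsum_mul_left]
    _ = 2 * ((∑' η, G η) * ∑' η : ℤ, ∑' ξ : ℤ, G η * F (ξ - η) ^ 2) := by
        rw [ENNReal.tsum_comm]
    _ = 2 * ((∑' η, G η) ^ 2 * ∑' v, F v ^ 2) := by
        have : ∀ η : ℤ, (∑' ξ : ℤ, G η * F (ξ - η) ^ 2) = G η * ∑' v, F v ^ 2 := by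
          intro η
          rw [ENNReal.tsum_mul_left]
          congr 1
          exact (Equiv.subRight η).tsum_eq (fun v => F v ^ 2)
        rw [tsum_congr this, ENNReal.tsum_mul_right, sq]
        ring

/-- L1: enorm of a tsum in ℂ. -/
lemma ofReal_norm_tsum_le (h : ℤ → ℂ) :
    ENNReal.ofReal ‖∑' i, h i‖ ≤ ∑' i, ENNReal.ofReal ‖h i‖ := by
  by_cases hs : Summable h
  · have hn : Summable fun i => ‖h i‖ := summable_norm_iff.mpr hs
    calc ENNReal.ofReal ‖∑' i, h i‖ ≤ ENNReal.ofReal (∑' i, ‖h i‖) :=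
          ENNReal.ofReal_le_ofReal (norm_tsum_le_tsum_norm hn)
      _ = ∑' i, ENNReal.ofReal ‖h i‖ :=
          ENNReal.ofReal_tsum_of_nonneg (fun i => norm_nonneg _) hn
  · rw [tsum_eq_zero_of_not_summable hs]
    simp

/-- Bridge: finiteness of the ENNReal sum gives summability of the real series. -/
lemma summable_of_ofReal_tsum_ne_top (u : ℤ → ℝ) (hu : ∀ i, 0 ≤ u i)
    (h : (∑' i, ENNReal.ofReal (u i)) ≠ ⊤) : Summable u := by
  have := ENNReal.summable_toReal h
  refine this.congr fun i => ?_
  exact ENNReal.toReal_ofReal (hu i)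


lemma my_rpow_sq (x : ℝ) (hx : 0 ≤ x) (σ : ℝ) : (x ^ σ) ^ 2 = x ^ (2 * σ) := by
  rw [← Real.rpow_natCast (x ^ σ) 2, ← Real.rpow_mul hx]
  congr 1
  push_cast; ring

lemma my_sqrt_two_rpow (σ : ℝ) : Real.sqrt 2 ^ (2 * σ) = (2:ℝ) ^ σ := by
  rw [Real.rpow_mul (Real.sqrt_nonneg 2)]
  congr 1
  have h : Real.sqrt 2 ^ (2:ℝ) = Real.sqrt 2 ^ (2:ℕ) := by
    rw [← Real.rpow_natCast (Real.sqrt 2) 2]; norm_num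
  rw [h, sq, Real.mul_self_sqrt (by norm_num)]

lemma one_le_abs_cast {v : ℤ} (hv : v ≠ 0) : (1:ℝ) ≤ |(v:ℝ)| := by
  exact_mod_cast Int.one_le_abs hv

lemma jb_le_sqrt2_abs {v : ℤ} (hv : v ≠ 0) : jb (v:ℝ) ≤ Real.sqrt 2 * |(v:ℝ)| := by
  have h1 : (1:ℝ) ≤ |(v:ℝ)| := one_le_abs_cast hv
  have h2 : 1 + (v:ℝ) ^ 2 ≤ 2 * (v:ℝ) ^ 2 := by nlinarith [sq_abs ((v:ℝ))]
  calc jb (v:ℝ) ≤ Real.sqrt (2 * (v:ℝ) ^ 2) := Real.sqrt_le_sqrt h2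
    _ = Real.sqrt 2 * |(v:ℝ)| := by
        rw [Real.sqrt_mul (by norm_num), Real.sqrt_sq_eq_abs]

lemma one_le_jb' (x : ℝ) : 1 ≤ jb x := Real.one_le_sqrt.mpr (by nlinarith [sq_nonneg x])

lemma abs_le_jb' (x : ℝ) : |x| ≤ jb x := by
  rw [← Real.sqrt_sq_eq_abs]
  exact Real.sqrt_le_sqrt (by nlinarith)

lemma pow_bound (σ : ℝ) (hσ : 0 ≤ σ) (h : ℤ → ℂ) (h0 : h 0 = 0) (v : ℤ) :
    (‖h v‖ * jb (v:ℝ) ^ σ) ^ 2 ≤ (2:ℝ) ^ σ * (‖h v‖ ^ 2 * |(v:ℝ)| ^ (2 * σ)) := by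
  rcases eq_or_ne v 0 with rfl | hv
  · have hz : ‖h 0‖ * jb ((0:ℤ):ℝ) ^ σ = 0 := by rw [h0]; simp
    rw [hz]
    have : ((0:ℝ)) ^ 2 ≤ (0:ℝ) := by norm_num
    calc ((0:ℝ)) ^ 2 = 0 := by norm_num
      _ ≤ _ := by positivity
  · have hjb : jb (v:ℝ) ≤ Real.sqrt 2 * |(v:ℝ)| := jb_le_sqrt2_abs hv
    have hkey : jb (v:ℝ) ^ (2 * σ) ≤ (2:ℝ) ^ σ * |(v:ℝ)| ^ (2 * σ) := by
      calc jb (v:ℝ) ^ (2 * σ) ≤ (Real.sqrt 2 * |(v:ℝ)|) ^ (2 * σ) :=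
            Real.rpow_le_rpow (jb_pos _).le hjb (by positivity)
        _ = Real.sqrt 2 ^ (2 * σ) * |(v:ℝ)| ^ (2 * σ) :=
            Real.mul_rpow (Real.sqrt_nonneg 2) (abs_nonneg _)
        _ = (2:ℝ) ^ σ * |(v:ℝ)| ^ (2 * σ) := by rw [my_sqrt_two_rpow]
    calc (‖h v‖ * jb (v:ℝ) ^ σ) ^ 2 = ‖h v‖ ^ 2 * (jb (v:ℝ) ^ σ) ^ 2 := by ring
      _ = ‖h v‖ ^ 2 * jb (v:ℝ) ^ (2 * σ) := by rw [my_rpow_sq _ (jb_pos _).le]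
      _ ≤ ‖h v‖ ^ 2 * ((2:ℝ) ^ σ * |(v:ℝ)| ^ (2 * σ)) := by
          apply mul_le_mul_of_nonneg_left hkey (by positivity)
      _ = (2:ℝ) ^ σ * (‖h v‖ ^ 2 * |(v:ℝ)| ^ (2 * σ)) := by ring

lemma summable_jb_neg (s₀ : ℝ) (hs₀ : 1 / 2 < s₀) :
    Summable (fun w : ℤ => jb (w:ℝ) ^ (2 * -s₀)) := by
  have h2s₀ : 1 < 2 * s₀ := by linarith
  have hu : Summable (fun n : ℤ => |(n:ℝ)| ^ (-(2 * s₀))) := Real.summable_abs_int_rpow h2s₀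
  have hu' : Summable (Function.update (fun n : ℤ => |(n:ℝ)| ^ (-(2 * s₀))) 0 1) :=
    hu.update 0 1
  apply Summable.of_nonneg_of_le (fun n => Real.rpow_nonneg (jb_pos _).le _) _ hu'
  intro n
  rcases eq_or_ne n 0 with rfl | hn
  · simp only [Int.cast_zero, Function.update_self]
    have hjb0 : jb (0:ℝ) = 1 := by simp [jb]
    rw [hjb0, Real.one_rpow]
  · rw [Function.update_of_ne hn]
    have h1 : (0:ℝ) < |(n:ℝ)| := by
      have := one_le_abs_cast hn; linarith
    have h2 : |(n:ℝ)| ≤ jb (n:ℝ) := abs_le_jb' _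
    calc jb (n:ℝ) ^ (2 * -s₀) = jb (n:ℝ) ^ (-(2 * s₀)) := by ring_nf
      _ ≤ |(n:ℝ)| ^ (-(2 * s₀)) :=
          Real.rpow_le_rpow_of_nonpos h1 h2 (by linarith)

lemma jb_le_one_add_abs' (x : ℝ) : jb x ≤ 1 + |x| := by
  have h : 1 + x ^ 2 ≤ (1 + |x|) ^ 2 := by
    have := abs_nonneg x
    nlinarith [sq_abs x]
  calc jb x ≤ Real.sqrt ((1 + |x|) ^ 2) := Real.sqrt_le_sqrt h
    _ = 1 + |x| := Real.sqrt_sq (by positivity)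

lemma one_add_abs_le_sqrt2_jb' (x : ℝ) : 1 + |x| ≤ Real.sqrt 2 * jb x := by
  have h : (1 + |x|) ^ 2 ≤ 2 * (1 + x ^ 2) := by
    nlinarith [sq_abs x, sq_nonneg (1 - |x|)]
  calc 1 + |x| = Real.sqrt ((1 + |x|) ^ 2) := (Real.sqrt_sq (by positivity)).symm
    _ ≤ Real.sqrt (2 * (1 + x ^ 2)) := Real.sqrt_le_sqrt h
    _ = Real.sqrt 2 * jb x := Real.sqrt_mul (by norm_num) _

lemma key_lemma (s ρ : ℝ) (hs0 : 0 ≤ s) (hρ0 : 0 ≤ ρ)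
    (a : ℤ → ℤ → ℂ) (Ca : ℝ) (hCa : 0 < Ca)
    (ha : ∀ v w : ℤ, ‖a v w‖ ≤
      Ca * (1 + min |(v : ℝ)| |(w : ℝ)|) ^ ρ / (1 + max |(v : ℝ)| |(w : ℝ)|) ^ ρ)
    (c₁ c₂ c₃ : ℝ) (hc₁ : 0 < c₁) (hc₂ : 0 < c₂) (hc₃ : 0 < c₃)
    (hsupp : ∀ ξ η : ℤ, a (ξ - η) η ≠ 0 →
      jb (ξ : ℝ) ≤ c₁ * max (jb ((ξ : ℝ) - η)) (jb (η : ℝ)) ∧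
      c₂ * jb ((ξ : ℝ) - η) ≤ jb (η : ℝ) ∧ jb (η : ℝ) ≤ c₃ * jb ((ξ : ℝ) - η))
    (ξ η : ℤ) :
    jb (ξ:ℝ) ^ (s + ρ) * ‖a (ξ - η) η‖ ≤
      (Ca * c₁ ^ (s + ρ) * (Real.sqrt 2 * max 1 c₃) ^ s * Real.sqrt 2 ^ ρ) *
        (jb (((ξ - η : ℤ)):ℝ) ^ s * jb ((η:ℤ):ℝ) ^ ρ) := by
  have h13 : (0:ℝ) < Real.sqrt 2 * max 1 c₃ := by
    have h1 : (0:ℝ) < max 1 c₃ := lt_of_lt_of_le one_pos (le_max_left _ _)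
    have h2 : (0:ℝ) < Real.sqrt 2 := Real.sqrt_pos.mpr (by norm_num)
    exact mul_pos h2 h1
  have hD : 0 < Ca * c₁ ^ (s + ρ) * (Real.sqrt 2 * max 1 c₃) ^ s * Real.sqrt 2 ^ ρ := by
    exact mul_pos (mul_pos (mul_pos hCa (Real.rpow_pos_of_pos hc₁ _))
      (Real.rpow_pos_of_pos h13 _)) (Real.rpow_pos_of_pos (Real.sqrt_pos.mpr (by norm_num)) _)
  have hc : ((ξ - η : ℤ):ℝ) = (ξ:ℝ) - (η:ℝ) := by push_cast; ring
  rw [hc]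
  by_cases h0 : a (ξ - η) η = 0
  · rw [h0, norm_zero, mul_zero]
    exact mul_nonneg hD.le (mul_nonneg (Real.rpow_nonneg (jb_pos _).le _)
      (Real.rpow_nonneg (jb_pos _).le _))
  · obtain ⟨h1, h2, h3⟩ := hsupp ξ η h0
    have haa := ha (ξ - η) η
    rw [hc] at haa
    set A : ℝ := 1 + max |(ξ:ℝ) - (η:ℝ)| |(η:ℝ)| with hAdef
    set B : ℝ := 1 + min |(ξ:ℝ) - (η:ℝ)| |(η:ℝ)| with hBdef
    have hA : 0 < A := by
      have : (0:ℝ) ≤ max |(ξ:ℝ) - (η:ℝ)| |(η:ℝ)| := le_max_of_le_left (abs_nonneg _)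
      rw [hAdef]; linarith
    have hB : 0 < B := by
      have : (0:ℝ) ≤ min |(ξ:ℝ) - (η:ℝ)| |(η:ℝ)| := le_min (abs_nonneg _) (abs_nonneg _)
      rw [hBdef]; linarith
    have hVW_A : max (jb ((ξ:ℝ) - η)) (jb (η:ℝ)) ≤ A := by
      calc max (jb ((ξ:ℝ) - η)) (jb (η:ℝ))
          ≤ max (1 + |(ξ:ℝ) - (η:ℝ)|) (1 + |(η:ℝ)|) :=
            max_le_max (jb_le_one_add_abs' _) (jb_le_one_add_abs' _)
        _ = A := max_add_add_left 1 _ _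
    have hXA : jb (ξ:ℝ) ≤ c₁ * A :=
      le_trans h1 (mul_le_mul_of_nonneg_left hVW_A hc₁.le)
    have hXrpow : jb (ξ:ℝ) ^ (s + ρ) ≤ c₁ ^ (s + ρ) * A ^ (s + ρ) := by
      have h := Real.rpow_le_rpow (z := s + ρ) (jb_pos _).le hXA (by linarith)
      rwa [Real.mul_rpow hc₁.le hA.le] at h
    have hAle : A ≤ (Real.sqrt 2 * max 1 c₃) * jb ((ξ:ℝ) - η) := by
      calc A = max (1 + |(ξ:ℝ) - (η:ℝ)|) (1 + |(η:ℝ)|) := (max_add_add_left 1 _ _).symm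
        _ ≤ max (Real.sqrt 2 * jb ((ξ:ℝ) - η)) (Real.sqrt 2 * jb (η:ℝ)) :=
            max_le_max (one_add_abs_le_sqrt2_jb' _) (one_add_abs_le_sqrt2_jb' _)
        _ = Real.sqrt 2 * max (jb ((ξ:ℝ) - η)) (jb (η:ℝ)) :=
            (mul_max_of_nonneg _ _ (Real.sqrt_nonneg 2)).symm
        _ ≤ Real.sqrt 2 * (max 1 c₃ * jb ((ξ:ℝ) - η)) := by
            apply mul_le_mul_of_nonneg_left _ (Real.sqrt_nonneg 2)
            calc max (jb ((ξ:ℝ) - η)) (jb (η:ℝ))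
                ≤ max (1 * jb ((ξ:ℝ) - η)) (c₃ * jb ((ξ:ℝ) - η)) :=
                  max_le_max (by rw [one_mul]) h3
              _ = max 1 c₃ * jb ((ξ:ℝ) - η) := (max_mul_of_nonneg _ _ (jb_pos _).le).symm
        _ = (Real.sqrt 2 * max 1 c₃) * jb ((ξ:ℝ) - η) := by ring
    have hAs : A ^ s ≤ (Real.sqrt 2 * max 1 c₃) ^ s * jb ((ξ:ℝ) - η) ^ s := by
      have h := Real.rpow_le_rpow hA.le hAle hs0
      rwa [Real.mul_rpow h13.le (jb_pos _).le] at h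
    have hBW : B ≤ Real.sqrt 2 * jb (η:ℝ) := by
      have hm := min_le_right |(ξ:ℝ) - (η:ℝ)| |(η:ℝ)|
      calc B ≤ 1 + |(η:ℝ)| := by rw [hBdef]; linarith
        _ ≤ Real.sqrt 2 * jb (η:ℝ) := one_add_abs_le_sqrt2_jb' _
    have hBρ : B ^ ρ ≤ Real.sqrt 2 ^ ρ * jb (η:ℝ) ^ ρ := by
      have h := Real.rpow_le_rpow hB.le hBW hρ0
      rwa [Real.mul_rpow (Real.sqrt_nonneg 2) (jb_pos _).le] at h
    calc jb (ξ:ℝ) ^ (s + ρ) * ‖a (ξ - η) η‖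
        ≤ (c₁ ^ (s + ρ) * A ^ (s + ρ)) * (Ca * B ^ ρ / A ^ ρ) := by
          apply mul_le_mul hXrpow haa (norm_nonneg _)
          exact mul_nonneg (Real.rpow_nonneg hc₁.le _) (Real.rpow_nonneg hA.le _)
      _ = (c₁ ^ (s + ρ) * Ca) * (A ^ s * B ^ ρ) := by
          rw [Real.rpow_add hA]
          have hAρ : A ^ ρ ≠ 0 := (Real.rpow_pos_of_pos hA ρ).ne'
          field_simp
      _ ≤ (c₁ ^ (s + ρ) * Ca) *
            (((Real.sqrt 2 * max 1 c₃) ^ s * jb ((ξ:ℝ) - η) ^ s) *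
              (Real.sqrt 2 ^ ρ * jb (η:ℝ) ^ ρ)) := by
          apply mul_le_mul_of_nonneg_left _
            (mul_nonneg (Real.rpow_nonneg hc₁.le _) hCa.le)
          exact mul_le_mul hAs hBρ (Real.rpow_nonneg hB.le _)
            (mul_nonneg (Real.rpow_nonneg h13.le _) (Real.rpow_nonneg (jb_pos _).le _))
      _ = (Ca * c₁ ^ (s + ρ) * (Real.sqrt 2 * max 1 c₃) ^ s * Real.sqrt 2 ^ ρ) *
            (jb ((ξ:ℝ) - η) ^ s * jb (η:ℝ) ^ ρ) := by ring

/-- bound for the paraproduct remainder R(f,g). -/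
theorem stmt1 (s₀ s ρ : ℝ) (hs₀ : 1 / 2 < s₀) (hs : s₀ ≤ s)
    (hρ0 : 0 ≤ ρ) (hρ : ρ ≤ s - s₀)
    (a : ℤ → ℤ → ℂ) (Ca : ℝ) (hCa : 0 < Ca)
    (ha : ∀ v w : ℤ, ‖a v w‖ ≤
      Ca * (1 + min |(v : ℝ)| |(w : ℝ)|) ^ ρ / (1 + max |(v : ℝ)| |(w : ℝ)|) ^ ρ)
    (c₁ c₂ c₃ : ℝ) (hc₁ : 0 < c₁) (hc₂ : 0 < c₂) (hc₃ : 0 < c₃)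
    (hsupp : ∀ ξ η : ℤ, a (ξ - η) η ≠ 0 →
      jb (ξ : ℝ) ≤ c₁ * max (jb ((ξ : ℝ) - η)) (jb (η : ℝ)) ∧
      c₂ * jb ((ξ : ℝ) - η) ≤ jb (η : ℝ) ∧ jb (η : ℝ) ≤ c₃ * jb ((ξ : ℝ) - η)) :
    ∃ C : ℝ, 0 < C ∧
      ∀ f g : ℤ → ℂ, f 0 = 0 → g 0 = 0 →
        Summable (fun j : ℤ => ‖f j‖ ^ 2 * |(j : ℝ)| ^ (2 * s)) →
        Summable (fun j : ℤ => ‖g j‖ ^ 2 * |(j : ℝ)| ^ (2 * s)) →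
        ∀ R : ℤ → ℂ,
          (∀ ξ : ℤ, R ξ = (2 * Real.pi)⁻¹ * ∑' η : ℤ, a (ξ - η) η * f (ξ - η) * g η) →
          SobNorm (s + ρ) R ≤
              C * (SobNorm s f * SobNorm (s₀ + ρ) g + SobNorm (s₀ + ρ) f * SobNorm s g) ∧
          SobNorm (s + ρ) R ≤ C * (SobNorm s f * SobNorm s g) := by

  have hs0pos : (0:ℝ) < s := lt_of_lt_of_le (by linarith) hs
  have hspos : (0:ℝ) ≤ s := hs0pos.le
  set D₁ : ℝ := Ca * c₁ ^ (s + ρ) * (Real.sqrt 2 * max 1 c₃) ^ s * Real.sqrt 2 ^ ρ with hD₁def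
  have hD₁ : 0 < D₁ := by
    rw [hD₁def]
    have h13 : (0:ℝ) < Real.sqrt 2 * max 1 c₃ :=
      mul_pos (Real.sqrt_pos.mpr (by norm_num)) (lt_of_lt_of_le one_pos (le_max_left _ _))
    exact mul_pos (mul_pos (mul_pos hCa (Real.rpow_pos_of_pos hc₁ _))
      (Real.rpow_pos_of_pos h13 _)) (Real.rpow_pos_of_pos (Real.sqrt_pos.mpr (by norm_num)) _)
  have key' : ∀ ξ η : ℤ, jb (ξ:ℝ) ^ (s + ρ) * ‖a (ξ - η) η‖ ≤
      D₁ * (jb (((ξ - η : ℤ)):ℝ) ^ s * jb ((η:ℤ):ℝ) ^ ρ) := by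
    intro ξ η
    rw [hD₁def]
    exact key_lemma s ρ hspos hρ0 a Ca hCa ha c₁ c₂ c₃ hc₁ hc₂ hc₃ hsupp ξ η
  have hM : Summable (fun w : ℤ => jb (w:ℝ) ^ (2 * -s₀)) := summable_jb_neg s₀ hs₀
  set M : ℝ := ∑' w : ℤ, jb (w:ℝ) ^ (2 * -s₀) with hMdef
  have hM0 : 0 ≤ M := by
    rw [hMdef]; exact tsum_nonneg fun w => Real.rpow_nonneg (jb_pos _).le _
  have hA2 : (0:ℝ) ≤ (2:ℝ) ^ (s₀ + ρ) := (Real.rpow_pos_of_pos (by norm_num) _).le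
  have hA3 : (0:ℝ) ≤ (2:ℝ) ^ s := (Real.rpow_pos_of_pos (by norm_num) _).le
  set D : ℝ := D₁ ^ 2 * 2 * (2 * M * (2:ℝ) ^ (s₀ + ρ)) * (2:ℝ) ^ s with hDdef
  have hD0 : 0 ≤ D := by
    rw [hDdef]
    exact mul_nonneg (mul_nonneg (mul_nonneg (sq_nonneg _) (by norm_num))
      (mul_nonneg (mul_nonneg (by norm_num) hM0) hA2)) hA3
  refine ⟨max 1 (Real.sqrt D), lt_of_lt_of_le one_pos (le_max_left _ _), ?_⟩
  intro f g hf0 hg0 hfs hgs R hR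
  have hSf0 : 0 ≤ SobSq s f := tsum_nonneg fun j => by positivity
  have hSg0 : 0 ≤ SobSq (s₀ + ρ) g := tsum_nonneg fun j => by positivity
  have hterm_g : ∀ j : ℤ, ‖g j‖ ^ 2 * |(j:ℝ)| ^ (2 * (s₀ + ρ)) ≤
      ‖g j‖ ^ 2 * |(j:ℝ)| ^ (2 * s) := by
    intro j
    rcases eq_or_ne j 0 with rfl | hj
    · simp [hg0]
    · exact mul_le_mul_of_nonneg_left
        (Real.rpow_le_rpow_of_exponent_le (one_le_abs_cast hj) (by linarith)) (by positivity)
  have hgs' : Summable (fun j : ℤ => ‖g j‖ ^ 2 * |(j:ℝ)| ^ (2 * (s₀ + ρ))) :=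
    Summable.of_nonneg_of_le (fun j => by positivity) hterm_g hgs
  set F : ℤ → ℝ≥0∞ := fun v => ENNReal.ofReal (‖f v‖ * jb (v:ℝ) ^ s) with hF
  set G : ℤ → ℝ≥0∞ := fun w => ENNReal.ofReal (‖g w‖ * jb (w:ℝ) ^ ρ) with hG
  have hSf_eq : ENNReal.ofReal (SobSq s f) =
      ∑' j : ℤ, ENNReal.ofReal (‖f j‖ ^ 2 * |(j:ℝ)| ^ (2 * s)) :=
    ENNReal.ofReal_tsum_of_nonneg (fun j => by positivity) hfs
  have hSg_eq : ENNReal.ofReal (SobSq (s₀ + ρ) g) =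
      ∑' j : ℤ, ENNReal.ofReal (‖g j‖ ^ 2 * |(j:ℝ)| ^ (2 * (s₀ + ρ))) :=
    ENNReal.ofReal_tsum_of_nonneg (fun j => by positivity) hgs'
  -- pointwise claim
  have claim_pt : ∀ ξ : ℤ, ENNReal.ofReal (‖R ξ‖ ^ 2 * |(ξ:ℝ)| ^ (2 * (s + ρ))) ≤
      (ENNReal.ofReal D₁ * ∑' η : ℤ, F (ξ - η) * G η) ^ 2 := by
    intro ξ
    have hW : (0:ℝ) ≤ jb (ξ:ℝ) ^ (s + ρ) := Real.rpow_nonneg (jb_pos _).le _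
    have step_a : ‖R ξ‖ ^ 2 * |(ξ:ℝ)| ^ (2 * (s + ρ)) ≤
        (‖R ξ‖ * jb (ξ:ℝ) ^ (s + ρ)) ^ 2 := by
      have h1 : |(ξ:ℝ)| ^ (2 * (s + ρ)) ≤ jb (ξ:ℝ) ^ (2 * (s + ρ)) :=
        Real.rpow_le_rpow (abs_nonneg _) (abs_le_jb' _) (by linarith)
      calc ‖R ξ‖ ^ 2 * |(ξ:ℝ)| ^ (2 * (s + ρ))
          ≤ ‖R ξ‖ ^ 2 * jb (ξ:ℝ) ^ (2 * (s + ρ)) :=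
            mul_le_mul_of_nonneg_left h1 (by positivity)
        _ = (‖R ξ‖ * jb (ξ:ℝ) ^ (s + ρ)) ^ 2 := by
            rw [mul_pow, my_rpow_sq _ (jb_pos _).le]
    have step_c : ENNReal.ofReal (‖R ξ‖ * jb (ξ:ℝ) ^ (s + ρ)) ≤
        ENNReal.ofReal D₁ * ∑' η : ℤ, F (ξ - η) * G η := by
      have hRn : ‖R ξ‖ ≤ ‖∑' η : ℤ, a (ξ - η) η * f (ξ - η) * g η‖ := by
        rw [hR ξ, norm_mul]
        have h2pi : (1:ℝ) ≤ 2 * Real.pi := by nlinarith [Real.pi_gt_three]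
        have hninv : ‖(((2 * Real.pi)⁻¹ : ℝ) : ℂ)‖ ≤ 1 := by
          rw [Complex.norm_real, Real.norm_eq_abs, abs_of_pos (by positivity)]
          exact inv_le_one_of_one_le₀ h2pi
        calc ‖(((2 * Real.pi)⁻¹ : ℝ) : ℂ)‖ * ‖∑' η : ℤ, a (ξ - η) η * f (ξ - η) * g η‖
            ≤ 1 * ‖∑' η : ℤ, a (ξ - η) η * f (ξ - η) * g η‖ :=
              mul_le_mul_of_nonneg_right hninv (norm_nonneg _)
          _ = _ := one_mul _
      have termwise : ∀ η : ℤ,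
          ENNReal.ofReal (jb (ξ:ℝ) ^ (s + ρ)) *
            ENNReal.ofReal ‖a (ξ - η) η * f (ξ - η) * g η‖ ≤
          ENNReal.ofReal D₁ * (F (ξ - η) * G η) := by
        intro η
        rw [← ENNReal.ofReal_mul hW]
        have hnorm : ‖a (ξ - η) η * f (ξ - η) * g η‖ =
            ‖a (ξ - η) η‖ * ‖f (ξ - η)‖ * ‖g η‖ := by rw [norm_mul, norm_mul]
        have hkey2 : jb (ξ:ℝ) ^ (s + ρ) * ‖a (ξ - η) η * f (ξ - η) * g η‖ ≤
            D₁ * ((‖f (ξ - η)‖ * jb (((ξ - η : ℤ)):ℝ) ^ s) * (‖g η‖ * jb ((η:ℤ):ℝ) ^ ρ)) := by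
          rw [hnorm]
          have h2 := mul_le_mul_of_nonneg_right (key' ξ η)
            (mul_nonneg (norm_nonneg (f (ξ - η))) (norm_nonneg (g η)))
          calc jb (ξ:ℝ) ^ (s + ρ) * (‖a (ξ - η) η‖ * ‖f (ξ - η)‖ * ‖g η‖)
              = jb (ξ:ℝ) ^ (s + ρ) * ‖a (ξ - η) η‖ * (‖f (ξ - η)‖ * ‖g η‖) := by ring
            _ ≤ D₁ * (jb (((ξ - η : ℤ)):ℝ) ^ s * jb ((η:ℤ):ℝ) ^ ρ) * (‖f (ξ - η)‖ * ‖g η‖) := h2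
            _ = D₁ * ((‖f (ξ - η)‖ * jb (((ξ - η : ℤ)):ℝ) ^ s) * (‖g η‖ * jb ((η:ℤ):ℝ) ^ ρ)) := by
                ring
        calc ENNReal.ofReal (jb (ξ:ℝ) ^ (s + ρ) * ‖a (ξ - η) η * f (ξ - η) * g η‖)
            ≤ ENNReal.ofReal (D₁ * ((‖f (ξ - η)‖ * jb (((ξ - η : ℤ)):ℝ) ^ s) *
                (‖g η‖ * jb ((η:ℤ):ℝ) ^ ρ))) := ENNReal.ofReal_le_ofReal hkey2
          _ = ENNReal.ofReal D₁ * (F (ξ - η) * G η) := by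
              simp only [hF, hG]
              rw [ENNReal.ofReal_mul hD₁.le, ENNReal.ofReal_mul
                (mul_nonneg (norm_nonneg _) (Real.rpow_nonneg (jb_pos _).le _))]
      calc ENNReal.ofReal (‖R ξ‖ * jb (ξ:ℝ) ^ (s + ρ))
          ≤ ENNReal.ofReal (jb (ξ:ℝ) ^ (s + ρ) *
              ‖∑' η : ℤ, a (ξ - η) η * f (ξ - η) * g η‖) := by
            apply ENNReal.ofReal_le_ofReal
            rw [mul_comm (‖R ξ‖)]
            exact mul_le_mul_of_nonneg_left hRn hW
        _ = ENNReal.ofReal (jb (ξ:ℝ) ^ (s + ρ)) *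
              ENNReal.ofReal ‖∑' η : ℤ, a (ξ - η) η * f (ξ - η) * g η‖ :=
            ENNReal.ofReal_mul hW
        _ ≤ ENNReal.ofReal (jb (ξ:ℝ) ^ (s + ρ)) *
              ∑' η : ℤ, ENNReal.ofReal ‖a (ξ - η) η * f (ξ - η) * g η‖ :=
            mul_le_mul_right (ofReal_norm_tsum_le _) _
        _ = ∑' η : ℤ, ENNReal.ofReal (jb (ξ:ℝ) ^ (s + ρ)) *
              ENNReal.ofReal ‖a (ξ - η) η * f (ξ - η) * g η‖ := ENNReal.tsum_mul_left.symm
        _ ≤ ∑' η : ℤ, ENNReal.ofReal D₁ * (F (ξ - η) * G η) := ENNReal.tsum_le_tsum termwise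
        _ = ENNReal.ofReal D₁ * ∑' η : ℤ, F (ξ - η) * G η := ENNReal.tsum_mul_left
    calc ENNReal.ofReal (‖R ξ‖ ^ 2 * |(ξ:ℝ)| ^ (2 * (s + ρ)))
        ≤ ENNReal.ofReal ((‖R ξ‖ * jb (ξ:ℝ) ^ (s + ρ)) ^ 2) :=
          ENNReal.ofReal_le_ofReal step_a
      _ = (ENNReal.ofReal (‖R ξ‖ * jb (ξ:ℝ) ^ (s + ρ))) ^ 2 :=
          ENNReal.ofReal_pow (by positivity) 2
      _ ≤ (ENNReal.ofReal D₁ * ∑' η : ℤ, F (ξ - η) * G η) ^ 2 := pow_le_pow_left' step_c 2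
  -- sums of squares
  have hFsq : ∑' v : ℤ, F v ^ 2 ≤ ENNReal.ofReal ((2:ℝ) ^ s) * ENNReal.ofReal (SobSq s f) := by
    have h1 : ∀ v : ℤ, F v ^ 2 ≤
        ENNReal.ofReal ((2:ℝ) ^ s * (‖f v‖ ^ 2 * |(v:ℝ)| ^ (2 * s))) := by
      intro v
      simp only [hF]
      rw [← ENNReal.ofReal_pow (mul_nonneg (norm_nonneg _) (Real.rpow_nonneg (jb_pos _).le _))]
      exact ENNReal.ofReal_le_ofReal (pow_bound s hspos f hf0 v)
    calc ∑' v : ℤ, F v ^ 2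
        ≤ ∑' v : ℤ, ENNReal.ofReal ((2:ℝ) ^ s * (‖f v‖ ^ 2 * |(v:ℝ)| ^ (2 * s))) :=
          ENNReal.tsum_le_tsum h1
      _ = ENNReal.ofReal ((2:ℝ) ^ s) *
            ∑' v : ℤ, ENNReal.ofReal (‖f v‖ ^ 2 * |(v:ℝ)| ^ (2 * s)) := by
          rw [← ENNReal.tsum_mul_left]
          exact tsum_congr fun v => ENNReal.ofReal_mul hA3
      _ = ENNReal.ofReal ((2:ℝ) ^ s) * ENNReal.ofReal (SobSq s f) := by rw [← hSf_eq]
  have hGsum_sq : (∑' w : ℤ, G w) ^ 2 ≤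
      2 * (ENNReal.ofReal M *
        (ENNReal.ofReal ((2:ℝ) ^ (s₀ + ρ)) * ENNReal.ofReal (SobSq (s₀ + ρ) g))) := by
    have hG_split : ∀ w : ℤ, G w = ENNReal.ofReal (jb (w:ℝ) ^ (-s₀)) *
        ENNReal.ofReal (‖g w‖ * jb (w:ℝ) ^ (s₀ + ρ)) := by
      intro w
      simp only [hG]
      rw [← ENNReal.ofReal_mul (Real.rpow_nonneg (jb_pos _).le _)]
      congr 1
      have hexp : jb (w:ℝ) ^ (-s₀) * jb (w:ℝ) ^ (s₀ + ρ) = jb (w:ℝ) ^ ρ := by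
        rw [← Real.rpow_add (jb_pos _)]; congr 1; ring
      calc ‖g w‖ * jb (w:ℝ) ^ ρ
          = ‖g w‖ * (jb (w:ℝ) ^ (-s₀) * jb (w:ℝ) ^ (s₀ + ρ)) := by rw [hexp]
        _ = jb (w:ℝ) ^ (-s₀) * (‖g w‖ * jb (w:ℝ) ^ (s₀ + ρ)) := by ring
    have hx2 : ∑' w : ℤ, (ENNReal.ofReal (jb (w:ℝ) ^ (-s₀))) ^ 2 = ENNReal.ofReal M := by
      have h1 : ∀ w : ℤ, (ENNReal.ofReal (jb (w:ℝ) ^ (-s₀))) ^ 2 =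
          ENNReal.ofReal (jb (w:ℝ) ^ (2 * -s₀)) := by
        intro w
        rw [← ENNReal.ofReal_pow (Real.rpow_nonneg (jb_pos _).le _),
          my_rpow_sq _ (jb_pos _).le]
      rw [tsum_congr h1, hMdef,
        ← ENNReal.ofReal_tsum_of_nonneg (fun w => Real.rpow_nonneg (jb_pos _).le _) hM]
    have hy2 : ∑' w : ℤ, (ENNReal.ofReal (‖g w‖ * jb (w:ℝ) ^ (s₀ + ρ))) ^ 2 ≤
        ENNReal.ofReal ((2:ℝ) ^ (s₀ + ρ)) * ENNReal.ofReal (SobSq (s₀ + ρ) g) := by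
      have h1 : ∀ w : ℤ, (ENNReal.ofReal (‖g w‖ * jb (w:ℝ) ^ (s₀ + ρ))) ^ 2 ≤
          ENNReal.ofReal ((2:ℝ) ^ (s₀ + ρ) * (‖g w‖ ^ 2 * |(w:ℝ)| ^ (2 * (s₀ + ρ)))) := by
        intro w
        rw [← ENNReal.ofReal_pow (mul_nonneg (norm_nonneg _) (Real.rpow_nonneg (jb_pos _).le _))]
        exact ENNReal.ofReal_le_ofReal (pow_bound (s₀ + ρ) (by linarith) g hg0 w)
      calc ∑' w : ℤ, (ENNReal.ofReal (‖g w‖ * jb (w:ℝ) ^ (s₀ + ρ))) ^ 2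
          ≤ ∑' w : ℤ, ENNReal.ofReal ((2:ℝ) ^ (s₀ + ρ) *
              (‖g w‖ ^ 2 * |(w:ℝ)| ^ (2 * (s₀ + ρ)))) := ENNReal.tsum_le_tsum h1
        _ = ENNReal.ofReal ((2:ℝ) ^ (s₀ + ρ)) *
              ∑' w : ℤ, ENNReal.ofReal (‖g w‖ ^ 2 * |(w:ℝ)| ^ (2 * (s₀ + ρ))) := by
            rw [← ENNReal.tsum_mul_left]
            exact tsum_congr fun w => ENNReal.ofReal_mul hA2
        _ = ENNReal.ofReal ((2:ℝ) ^ (s₀ + ρ)) * ENNReal.ofReal (SobSq (s₀ + ρ) g) := by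
            rw [← hSg_eq]
    calc (∑' w : ℤ, G w) ^ 2
        = (∑' w : ℤ, ENNReal.ofReal (jb (w:ℝ) ^ (-s₀)) *
            ENNReal.ofReal (‖g w‖ * jb (w:ℝ) ^ (s₀ + ρ))) ^ 2 := by
          rw [tsum_congr hG_split]
      _ ≤ 2 * ((∑' w : ℤ, (ENNReal.ofReal (jb (w:ℝ) ^ (-s₀))) ^ 2) *
            (∑' w : ℤ, (ENNReal.ofReal (‖g w‖ * jb (w:ℝ) ^ (s₀ + ρ))) ^ 2)) :=
          cs_ennreal _ _
      _ ≤ 2 * (ENNReal.ofReal M *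
            (ENNReal.ofReal ((2:ℝ) ^ (s₀ + ρ)) * ENNReal.ofReal (SobSq (s₀ + ρ) g))) := by
          rw [hx2]
          exact mul_le_mul_right (mul_le_mul_right hy2 _) _
  -- combine
  have hER : (∑' ξ : ℤ, ENNReal.ofReal (‖R ξ‖ ^ 2 * |(ξ:ℝ)| ^ (2 * (s + ρ)))) ≤
      (ENNReal.ofReal D₁) ^ 2 * (2 * ((2 * (ENNReal.ofReal M *
        (ENNReal.ofReal ((2:ℝ) ^ (s₀ + ρ)) * ENNReal.ofReal (SobSq (s₀ + ρ) g)))) *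
        (ENNReal.ofReal ((2:ℝ) ^ s) * ENNReal.ofReal (SobSq s f)))) := by
    calc (∑' ξ : ℤ, ENNReal.ofReal (‖R ξ‖ ^ 2 * |(ξ:ℝ)| ^ (2 * (s + ρ))))
        ≤ ∑' ξ : ℤ, (ENNReal.ofReal D₁ * ∑' η : ℤ, F (ξ - η) * G η) ^ 2 :=
          ENNReal.tsum_le_tsum claim_pt
      _ = (ENNReal.ofReal D₁) ^ 2 * ∑' ξ : ℤ, (∑' η : ℤ, F (ξ - η) * G η) ^ 2 := by
          rw [← ENNReal.tsum_mul_left]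
          exact tsum_congr fun ξ => mul_pow _ _ _
      _ ≤ (ENNReal.ofReal D₁) ^ 2 * (2 * ((∑' η : ℤ, G η) ^ 2 * ∑' v : ℤ, F v ^ 2)) :=
          mul_le_mul_right (schur_ennreal F G) _
      _ ≤ _ := by
          apply mul_le_mul_right
          apply mul_le_mul_right
          exact mul_le_mul' hGsum_sq hFsq
  have hfin : ((ENNReal.ofReal D₁) ^ 2 * (2 * ((2 * (ENNReal.ofReal M *
        (ENNReal.ofReal ((2:ℝ) ^ (s₀ + ρ)) * ENNReal.ofReal (SobSq (s₀ + ρ) g)))) *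
        (ENNReal.ofReal ((2:ℝ) ^ s) * ENNReal.ofReal (SobSq s f))))) ≠ ⊤ := by
    apply ENNReal.mul_ne_top (ENNReal.pow_ne_top ENNReal.ofReal_ne_top)
    apply ENNReal.mul_ne_top ENNReal.ofNat_ne_top
    apply ENNReal.mul_ne_top
    · apply ENNReal.mul_ne_top ENNReal.ofNat_ne_top
      exact ENNReal.mul_ne_top ENNReal.ofReal_ne_top
        (ENNReal.mul_ne_top ENNReal.ofReal_ne_top ENNReal.ofReal_ne_top)
    · exact ENNReal.mul_ne_top ENNReal.ofReal_ne_top ENNReal.ofReal_ne_top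
  have hERfin : (∑' ξ : ℤ, ENNReal.ofReal (‖R ξ‖ ^ 2 * |(ξ:ℝ)| ^ (2 * (s + ρ)))) ≠ ⊤ :=
    ne_top_of_le_ne_top hfin hER
  have hsumR : Summable (fun ξ : ℤ => ‖R ξ‖ ^ 2 * |(ξ:ℝ)| ^ (2 * (s + ρ))) :=
    summable_of_ofReal_tsum_ne_top _ (fun ξ => by positivity) hERfin
  have hSR_eq : ENNReal.ofReal (SobSq (s + ρ) R) =
      ∑' ξ : ℤ, ENNReal.ofReal (‖R ξ‖ ^ 2 * |(ξ:ℝ)| ^ (2 * (s + ρ))) :=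
    ENNReal.ofReal_tsum_of_nonneg (fun ξ => by positivity) hsumR
  have hSR0 : 0 ≤ SobSq (s + ρ) R := tsum_nonneg fun ξ => by positivity
  have hSR_le : SobSq (s + ρ) R ≤ D * (SobSq s f * SobSq (s₀ + ρ) g) := by
    have h1 : SobSq (s + ρ) R =
        (∑' ξ : ℤ, ENNReal.ofReal (‖R ξ‖ ^ 2 * |(ξ:ℝ)| ^ (2 * (s + ρ)))).toReal := by
      rw [← hSR_eq, ENNReal.toReal_ofReal hSR0]
    rw [h1]
    refine le_trans (ENNReal.toReal_mono hfin hER) ?_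
    have htR : ((ENNReal.ofReal D₁) ^ 2 * (2 * ((2 * (ENNReal.ofReal M *
        (ENNReal.ofReal ((2:ℝ) ^ (s₀ + ρ)) * ENNReal.ofReal (SobSq (s₀ + ρ) g)))) *
        (ENNReal.ofReal ((2:ℝ) ^ s) * ENNReal.ofReal (SobSq s f))))).toReal =
        D₁ ^ 2 * (2 * ((2 * (M * ((2:ℝ) ^ (s₀ + ρ) * SobSq (s₀ + ρ) g))) *
          ((2:ℝ) ^ s * SobSq s f))) := by
      simp only [ENNReal.toReal_mul, ENNReal.toReal_pow, ENNReal.toReal_ofNat,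
        ENNReal.toReal_ofReal hD₁.le, ENNReal.toReal_ofReal hM0,
        ENNReal.toReal_ofReal hA2, ENNReal.toReal_ofReal hA3,
        ENNReal.toReal_ofReal hSf0, ENNReal.toReal_ofReal hSg0]
    rw [htR, hDdef]
    apply le_of_eq
    ring
  have hmain : SobNorm (s + ρ) R ≤ Real.sqrt D * (SobNorm s f * SobNorm (s₀ + ρ) g) := by
    have h := Real.sqrt_le_sqrt hSR_le
    calc SobNorm (s + ρ) R = Real.sqrt (SobSq (s + ρ) R) := rfl
      _ ≤ Real.sqrt (D * (SobSq s f * SobSq (s₀ + ρ) g)) := h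
      _ = Real.sqrt D * (Real.sqrt (SobSq s f) * Real.sqrt (SobSq (s₀ + ρ) g)) := by
          rw [Real.sqrt_mul hD0, Real.sqrt_mul hSf0]
      _ = Real.sqrt D * (SobNorm s f * SobNorm (s₀ + ρ) g) := rfl
  have hg_mono : SobNorm (s₀ + ρ) g ≤ SobNorm s g := by
    apply Real.sqrt_le_sqrt
    exact Summable.tsum_le_tsum hterm_g hgs' hgs
  have hnnf : 0 ≤ SobNorm s f := Real.sqrt_nonneg _
  have hnng : 0 ≤ SobNorm (s₀ + ρ) g := Real.sqrt_nonneg _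
  have hnng' : 0 ≤ SobNorm s g := Real.sqrt_nonneg _
  have hnnf' : 0 ≤ SobNorm (s₀ + ρ) f := Real.sqrt_nonneg _
  have hCmax : Real.sqrt D ≤ max 1 (Real.sqrt D) := le_max_right _ _
  have hCpos : (0:ℝ) ≤ max 1 (Real.sqrt D) := le_trans zero_le_one (le_max_left _ _)
  constructor
  · calc SobNorm (s + ρ) R ≤ Real.sqrt D * (SobNorm s f * SobNorm (s₀ + ρ) g) := hmain
      _ ≤ max 1 (Real.sqrt D) * (SobNorm s f * SobNorm (s₀ + ρ) g) :=
          mul_le_mul_of_nonneg_right hCmax (mul_nonneg hnnf hnng)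
      _ ≤ max 1 (Real.sqrt D) *
            (SobNorm s f * SobNorm (s₀ + ρ) g + SobNorm (s₀ + ρ) f * SobNorm s g) := by
          apply mul_le_mul_of_nonneg_left _ hCpos
          exact le_add_of_nonneg_right (mul_nonneg hnnf' hnng')
  · calc SobNorm (s + ρ) R ≤ Real.sqrt D * (SobNorm s f * SobNorm (s₀ + ρ) g) := hmain
      _ ≤ Real.sqrt D * (SobNorm s f * SobNorm s g) := by
          apply mul_le_mul_of_nonneg_left _ (Real.sqrt_nonneg D)
          exact mul_le_mul_of_nonneg_left hg_mono hnnf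
      _ ≤ max 1 (Real.sqrt D) * (SobNorm s f * SobNorm s g) :=
          mul_le_mul_of_nonneg_right hCmax (mul_nonneg hnnf hnng')
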